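/- arXiv:1712.07845 — 5 statements merged into one kernel-verified Lean document; each statement's English description precedes it below -/
import Mathlib

section
/- Let K be a 1-skeletal simplicial set. Then the homotopy category hK is isomorphic to the path category (free category) Paths Q(K) on the quiver Q(K) of nondegenerate edges of K, via the functor that is the identity on objects (the 0-simplices of K) and sends each generating arrow of Q(K), i.e. each nondegenerate 1-simplex of K, to its class in hK. In particular, morphisms X → Y in hK correspond bijectively to finite sequences of adjacent nondegenerate edges of K from X to Y. -/
open CategoryTheory Simplicial Opposite

universe u

/-- A simplicial set is 1-skeletal if every simplex of dimension ≥ 2 is degenerate. -/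
def SSet.OneSkeletal (K : SSet.{u}) : Prop :=
  ∀ (n : ℕ) (x : K _⦋n+2⦌), ∃ (i : Fin (n+2)) (y : K _⦋n+1⦌), K.σ i y = x

namespace SSetPaper

/-- The quiver whose vertices are the `0`-simplices of `K` and whose arrows `x ⟶ y`
are the nondegenerate `1`-simplices `e` of `K` with `d₁ e = x` and `d₀ e = y`. -/
def EdgeQuiver (K : SSet.{u}) : Type u := K _⦋0⦌

instance (K : SSet.{u}) : Quiver (EdgeQuiver K) where
  Hom x y := { e : K _⦋1⦌ // (∀ z : K _⦋0⦌, K.σ 0 z ≠ e) ∧ K.δ 1 e = x ∧ K.δ 0 e = y }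

end SSetPaper

/-!
Every 2-simplex of a 1-skeletal `K` is `σ₀ s` or `σ₁ s`, so one of its first two edges is
degenerate and the other one is its third edge. Hence sending a nondegenerate edge to its singleton
path and a degenerate one to an identity respects the relations that define the homotopy category,
which gives a map `K ⟶ N(Paths Q(K))`. Since nerves are 2-coskeletal and strict Segal, a map
`K ⟶ N D` is determined by its values on vertices and nondegenerate edges, so composition with this
map identifies functors `Paths Q(K) ⥤ D` with maps `K ⟶ N D`: the universal property of `hK`.
-/

open SSet SimplexCategory.Truncated

namespace SSetPaper

section NerveCoskeletal

variable {X : SSet.{u}} {C : Type u} [SmallCategory C]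

/-- Nerves are 2-coskeletal: a map into a nerve may be given on the 2-truncation. -/
noncomputable def homToNerveOfTruncation
    (φ : (truncation 2).obj X ⟶ (truncation 2).obj (nerve C)) : X ⟶ nerve C :=
  (nerve C).liftOfIsRightKanExtension (𝟙 _) X φ

lemma truncation_map_homToNerveOfTruncation
    (φ : (truncation 2).obj X ⟶ (truncation 2).obj (nerve C)) :
    (truncation 2).map (homToNerveOfTruncation φ) = φ :=
  (Category.comp_id _).symm.trans <| (nerve C).liftOfIsRightKanExtension_fac (𝟙 _) X φ

lemma homToNerveOfTruncation_app_zero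
    (φ : (truncation 2).obj X ⟶ (truncation 2).obj (nerve C)) (x : X _⦋0⦌) :
    (homToNerveOfTruncation φ).app (op ⦋0⦌) x = φ.app (op ⦋0⦌₂) x :=
  ConcreteCategory.congr_hom
    (congr_app (truncation_map_homToNerveOfTruncation φ) (op ⦋0⦌₂)) x

lemma homToNerveOfTruncation_app_one
    (φ : (truncation 2).obj X ⟶ (truncation 2).obj (nerve C)) (s : X _⦋1⦌) :
    (homToNerveOfTruncation φ).app (op ⦋1⦌) s = φ.app (op ⦋1⦌₂) s :=
  ConcreteCategory.congr_hom
    (congr_app (truncation_map_homToNerveOfTruncation φ) (op ⦋1⦌₂)) s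

lemma nerve_hom_ext {ψ₁ ψ₂ : X ⟶ nerve C} (h : ∀ s : X _⦋1⦌, ψ₁.app _ s = ψ₂.app _ s) :
    ψ₁ = ψ₂ :=
  (nerve C).hom_ext_of_isRightKanExtension (𝟙 _) ψ₁ ψ₂
    (congrArg (· ≫ 𝟙 _) (Truncated.IsStrictSegal.hom_ext (f := (truncation 2).map ψ₁)
      (g := (truncation 2).map ψ₂) h))

lemma nerve_hom_ext_of_nondegenerate {ψ₁ ψ₂ : X ⟶ nerve C}
    (h₀ : ∀ x : X _⦋0⦌, ψ₁.app _ x = ψ₂.app _ x)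
    (h₁ : ∀ s : X _⦋1⦌, (∀ z, X.σ 0 z ≠ s) → ψ₁.app _ s = ψ₂.app _ s) : ψ₁ = ψ₂ := by
  refine nerve_hom_ext fun s ↦ ?_
  by_cases hs : ∀ z, X.σ 0 z ≠ s
  · exact h₁ s hs
  · obtain ⟨z, rfl⟩ := not_forall_not.mp hs
    rw [σ_naturality_apply, σ_naturality_apply, h₀]

end NerveCoskeletal

lemma _root_.CategoryTheory.Paths.ext_functor_of_mk₁ {V : Type*} [Quiver V] {C : Type*}
    [Category C] {F G : Paths V ⥤ C} (h_obj : ∀ a, F.obj a = G.obj a)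
    (h : ∀ (a b : V) (e : a ⟶ b),
      ComposableArrows.mk₁ (F.map e.toPath) = ComposableArrows.mk₁ (G.map e.toPath)) :
    F = G := by
  refine Paths.ext_functor (funext h_obj) fun a b e ↦ ?_
  obtain ⟨_, _, hFG⟩ := (Arrow.mk_eq_mk_iff _ _).1 (congrArg ComposableArrows.arrowEquiv (h a b e))
  exact hFG

variable {K : SSet.{u}} {x y : K _⦋0⦌}

lemma eq_of_σ_zero_eq_edge (e : Edge x y) {z : K _⦋0⦌} (hz : K.σ 0 z = e.edge) : x = y := by
  have h₁ : K.δ 1 (K.σ 0 z) = z := δ_comp_σ_succ_apply 0 z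
  have h₀ : K.δ 0 (K.σ 0 z) = z := δ_comp_σ_self_apply 0 z
  rw [hz] at h₀ h₁
  rw [← e.src_eq, h₁, ← h₀, e.tgt_eq]

open Classical in
noncomputable def edgePath (e : Edge x y) :
    (Paths.of (EdgeQuiver K)).obj x ⟶ (Paths.of (EdgeQuiver K)).obj y :=
  if h : ∀ z, K.σ 0 z ≠ e.edge then (Paths.of (EdgeQuiver K)).map ⟨e.edge, h, e.src_eq, e.tgt_eq⟩
  else eqToHom (eq_of_σ_zero_eq_edge e (Classical.not_forall_not.mp h).choose_spec)

lemma edgePath_of_nondegenerate (e : Edge x y) (h : ∀ z, K.σ 0 z ≠ e.edge) :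
    edgePath e = (Paths.of (EdgeQuiver K)).map ⟨e.edge, h, e.src_eq, e.tgt_eq⟩ :=
  dif_pos h

lemma edgePath_of_degenerate (e : Edge x x) {z : K _⦋0⦌} (hz : K.σ 0 z = e.edge) :
    edgePath e = 𝟙 _ :=
  dif_neg (not_forall_not.mpr ⟨z, hz⟩)

lemma edgePath_comp_of_degenerate_left {x₀ x₁ x₂ : K _⦋0⦌} (e₀₁ : Edge x₀ x₁)
    (e₁₂ : Edge x₁ x₂) (e₀₂ : Edge x₀ x₂) {z : K _⦋0⦌} (hz : K.σ 0 z = e₀₁.edge)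
    (h : e₁₂.edge = e₀₂.edge) : edgePath e₀₁ ≫ edgePath e₁₂ = edgePath e₀₂ := by
  obtain rfl := eq_of_σ_zero_eq_edge e₀₁ hz
  obtain rfl : e₁₂ = e₀₂ := Edge.ext h
  rw [edgePath_of_degenerate e₀₁ hz, Category.id_comp]

lemma edgePath_comp_of_degenerate_right {x₀ x₁ x₂ : K _⦋0⦌} (e₀₁ : Edge x₀ x₁)
    (e₁₂ : Edge x₁ x₂) (e₀₂ : Edge x₀ x₂) {z : K _⦋0⦌} (hz : K.σ 0 z = e₁₂.edge)
    (h : e₀₁.edge = e₀₂.edge) : edgePath e₀₁ ≫ edgePath e₁₂ = edgePath e₀₂ := by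
  obtain rfl := eq_of_σ_zero_eq_edge e₁₂ hz
  obtain rfl : e₀₁ = e₀₂ := Edge.ext h
  rw [edgePath_of_degenerate e₁₂ hz, Category.comp_id]

lemma edgePath_comp (hK : K.OneSkeletal) {x₀ x₁ x₂ : K _⦋0⦌} {e₀₁ : Edge x₀ x₁}
    {e₁₂ : Edge x₁ x₂} {e₀₂ : Edge x₀ x₂} (h : Edge.CompStruct e₀₁ e₁₂ e₀₂) :
    edgePath e₀₁ ≫ edgePath e₁₂ = edgePath e₀₂ := by
  obtain ⟨i, s, hs⟩ := hK 0 h.simplex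
  have d₀ := h.d₀
  have d₁ := h.d₁
  have d₂ := h.d₂
  rw [← hs] at d₀ d₁ d₂
  fin_cases i
  · refine edgePath_comp_of_degenerate_left _ _ _ (z := K.δ 1 s) ?_ (d₀.symm.trans ?_)
    · rw [← d₂]; exact (δ_comp_σ_of_gt_apply (i := 1) (j := 0) (by decide) s).symm
    · rw [← d₁]; exact (δ_comp_σ_self_apply 0 s).trans (δ_comp_σ_succ_apply 0 s).symm
  · refine edgePath_comp_of_degenerate_right _ _ _ (z := K.δ 0 s) ?_ (d₂.symm.trans ?_)
    · rw [← d₀]; exact (δ_comp_σ_of_le_apply (i := 0) (j := 0) (by decide) s).symm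
    · rw [← d₁]; exact (δ_comp_σ_succ_apply 1 s).trans (δ_comp_σ_self_apply 1 s).symm

noncomputable def homotopyCategoryToPaths (hK : K.OneSkeletal) :
    ((truncation 2).obj K).HomotopyCategory ⥤ Paths (EdgeQuiver K) :=
  Truncated.HomotopyCategory.lift (fun x ↦ (Paths.of (EdgeQuiver K)).obj x)
    (fun e ↦ edgePath (Edge.ofTruncated e)) (fun x ↦ edgePath_of_degenerate (Edge.id x) rfl)
    (fun h ↦ edgePath_comp hK (Edge.CompStruct.ofTruncated h))

lemma homotopyCategoryToPaths_map_homMk (hK : K.OneSkeletal) (e : Edge x y) :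
    (homotopyCategoryToPaths hK).map (Truncated.HomotopyCategory.homMk e.toTruncated) =
      edgePath e := by
  unfold homotopyCategoryToPaths
  apply Truncated.HomotopyCategory.lift_map_homMk
  exact fun h ↦ edgePath_comp hK (Edge.CompStruct.ofTruncated h)

noncomputable def toNervePaths (hK : K.OneSkeletal) : K ⟶ nerve (Paths (EdgeQuiver K)) :=
  homToNerveOfTruncation (Truncated.HomotopyCategory.homToNerveMk (homotopyCategoryToPaths hK))

lemma toNervePaths_app_zero (hK : K.OneSkeletal) (x : EdgeQuiver K) :
    (toNervePaths hK).app (op ⦋0⦌) x =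
      ComposableArrows.mk₀ ((Paths.of (EdgeQuiver K)).obj x) :=
  (homToNerveOfTruncation_app_zero _ x).trans (ComposableArrows.ext₀ rfl)

lemma toNervePaths_app_one (hK : K.OneSkeletal) {x y : EdgeQuiver K} (e : x ⟶ y) :
    (toNervePaths hK).app (op ⦋1⦌) e.1 =
      ComposableArrows.mk₁ ((Paths.of (EdgeQuiver K)).map e) := by
  refine (homToNerveOfTruncation_app_one _ e.1).trans ?_
  obtain ⟨s, hs, rfl, rfl⟩ := e
  refine (Truncated.HomotopyCategory.homToNerveMk_app_edge _ (Edge.mk' s).toTruncated).trans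
    (congrArg ComposableArrows.mk₁ ?_)
  exact (homotopyCategoryToPaths_map_homMk hK (Edge.mk' s)).trans
    (edgePath_of_nondegenerate (Edge.mk' s) hs)

section UniversalProperty

variable {D : Type u} [SmallCategory D]

noncomputable def pathsLift (ψ : K ⟶ nerve D) : Paths (EdgeQuiver K) ⥤ D :=
  Paths.lift
    { obj x := nerveEquiv (ψ.app _ x)
      map e := nerve.homEquiv ((Edge.mk e.1 e.2.2.1 e.2.2.2).map ψ) }

lemma mk₀_pathsLift_obj (ψ : K ⟶ nerve D) (x : EdgeQuiver K) :
    ComposableArrows.mk₀ ((pathsLift ψ).obj ((Paths.of (EdgeQuiver K)).obj x)) = ψ.app _ x :=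
  ComposableArrows.ext₀ rfl

lemma mk₁_pathsLift_map (ψ : K ⟶ nerve D) {x y : EdgeQuiver K} (e : x ⟶ y) :
    ComposableArrows.mk₁ ((pathsLift ψ).map ((Paths.of (EdgeQuiver K)).map e)) = ψ.app _ e.1 := by
  refine (congrArg ComposableArrows.mk₁ (Paths.lift_toPath _ e)).trans ?_
  exact (nerve.mk₁_homEquiv_apply _).trans (ComposableArrows.mk₁_hom _)

variable (hK : K.OneSkeletal) (F : Paths (EdgeQuiver K) ⥤ D)

lemma toNervePaths_comp_nerveMap_app_zero (x : EdgeQuiver K) :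
    (toNervePaths hK ≫ nerveMap F).app _ x =
      ComposableArrows.mk₀ (F.obj ((Paths.of (EdgeQuiver K)).obj x)) :=
  (congrArg ((nerveMap F).app _) (toNervePaths_app_zero hK x)).trans (nerveMap_app_mk₀ F _)

lemma toNervePaths_comp_nerveMap_app_one {x y : EdgeQuiver K} (e : x ⟶ y) :
    (toNervePaths hK ≫ nerveMap F).app _ e.1 =
      ComposableArrows.mk₁ (F.map ((Paths.of (EdgeQuiver K)).map e)) :=
  (congrArg ((nerveMap F).app _) (toNervePaths_app_one hK e)).trans (nerveMap_app_mk₁ F _)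

noncomputable def pathsFunctorEquiv : (Paths (EdgeQuiver K) ⥤ D) ≃ (K ⟶ nerve D) where
  toFun F := toNervePaths hK ≫ nerveMap F
  invFun := pathsLift
  left_inv F := Paths.ext_functor_of_mk₁
    (fun x ↦ congrArg (fun s ↦ s.obj 0) (mk₀_pathsLift_obj _ x |>.trans
      (toNervePaths_comp_nerveMap_app_zero hK F x)))
    (fun _ _ e ↦ (mk₁_pathsLift_map _ e).trans (toNervePaths_comp_nerveMap_app_one hK F e))
  right_inv ψ := nerve_hom_ext_of_nondegenerate
    (fun x ↦ (toNervePaths_comp_nerveMap_app_zero hK _ x).trans (mk₀_pathsLift_obj ψ x))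
    (fun s hs ↦ (toNervePaths_comp_nerveMap_app_one hK _ ⟨s, hs, rfl, rfl⟩).trans
      (mk₁_pathsLift_map ψ ⟨s, hs, rfl, rfl⟩))

end UniversalProperty

/-- For a 1-skeletal simplicial set `K`, the homotopy category `hK` is
isomorphic to the path category on the quiver of nondegenerate edges of `K`, via the
functor which is the identity on objects (i.e. sends a `0`-simplex `x` to the object of
`hK` it determines under the unit `K ⟶ N(hK)`) and sends each nondegenerate `1`-simplex
to its class in `hK` (i.e. to the morphism determined by its image under the unit). -/
theorem homotopyCategory_iso_paths_of_oneSkeletal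
    (h : SSet.{u} ⥤ Cat.{u, u}) (adj : h ⊣ nerveFunctor.{u, u})
    (K : SSet.{u}) (hK : K.OneSkeletal) :
    ∃ F : Paths (EdgeQuiver K) ⥤ h.obj K,
      (∀ x : EdgeQuiver K,
        ComposableArrows.mk₀ (F.obj ((Paths.of (EdgeQuiver K)).obj x)) = (adj.unit.app K).app (op ⦋0⦌) x) ∧
      (∀ (x y : EdgeQuiver K) (e : x ⟶ y),
        ComposableArrows.mk₁ (F.map ((Paths.of (EdgeQuiver K)).map e)) = (adj.unit.app K).app (op ⦋1⦌) e.1) ∧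
      IsIso (X := Cat.of (Paths (EdgeQuiver K))) (Y := h.obj K) F.toCatHom := by
  let Φ : K ⟶ nerveFunctor.obj (Cat.of (Paths (EdgeQuiver K))) := toNervePaths hK
  let F : Cat.of (Paths (EdgeQuiver K)) ⟶ h.obj K :=
    ((pathsFunctorEquiv hK).symm (adj.unit.app K)).toCatHom
  let G := (adj.homEquiv K (Cat.of (Paths (EdgeQuiver K)))).symm Φ
  have hF : Φ ≫ nerveFunctor.map F = adj.unit.app K := (pathsFunctorEquiv hK).apply_symm_apply _
  have hG : adj.unit.app K ≫ nerveFunctor.map G = Φ :=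
    (adj.homEquiv_unit _ _ _).symm.trans ((adj.homEquiv _ _).apply_symm_apply Φ)
  have hFG : F ≫ G = 𝟙 _ := by
    refine Cat.Hom.ext ((pathsFunctorEquiv hK).injective ?_)
    change Φ ≫ nerveFunctor.map (F ≫ G) = Φ ≫ nerveFunctor.map (𝟙 (Cat.of (Paths (EdgeQuiver K))))
    rw [Functor.map_comp, reassoc_of% hF, hG, CategoryTheory.Functor.map_id, Category.comp_id]
  have hGF : G ≫ F = 𝟙 _ := by
    refine (adj.homEquiv _ _).injective ?_
    rw [Adjunction.homEquiv_unit, Adjunction.homEquiv_unit, Functor.map_comp, reassoc_of% hG,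
      hF, CategoryTheory.Functor.map_id]
    exact (Category.comp_id _).symm
  exact ⟨F.toFunctor, mk₀_pathsLift_obj _, fun _ _ ↦ mk₁_pathsLift_map _, ⟨G, hFG, hGF⟩⟩

end SSetPaper
end

section
/- Let 𝒞 be a quasi-category and K a 1-skeletal simplicial set. Then for every functor u : hK ⥤ h𝒞 there exists a simplicial map f : K → 𝒞 with h(f) = u. (In other words, the forgetful comparison map from simplicial maps K → 𝒞 to functors hK ⥤ h𝒞 is surjective.) -/
/-!
Both `h` and `hoFunctor` are left adjoint to the nerve, hence isomorphic, so it suffices to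
treat `hoFunctor`, whose value at `X` has the vertices of `X` as objects and is generated by
the edges of `X`. In a quasi-category, inner 2-horn fillers show that the morphisms represented
by a single edge are closed under composition, so every morphism of `h𝒞` is represented by an
edge. Given `u`, choose a vertex of `𝒞` over the image of each vertex of `K` and an edge over
the image of each edge, degenerate over degenerate. Since `K` is 1-skeletal, every higher
simplex is a degeneracy `σ_i y` of a lower one; sending it to `σ_i` of the image of `y` extends
these choices to a simplicial map. The choice of `(i, y)` is immaterial because
`σ_i y = σ_j x` with `i < j` forces `y = σ_{j-1} z` and `x = σ_i z` for a common `z`. The map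
induces `u` because both functors agree on edges.
-/

open CategoryTheory Simplicial Opposite

universe u

lemma CategoryTheory.Functor.map_surjective_of_iso {C D : Type*} [Category* C] [Category* D]
    {F G : C ⥤ D} (α : F ≅ G) {X Y : C} (hG : Function.Surjective (G.map (X := X) (Y := Y))) :
    Function.Surjective (F.map (X := X) (Y := Y)) := fun u => by
  obtain ⟨f, hf⟩ := hG (α.inv.app X ≫ u ≫ α.hom.app Y)
  exact ⟨f, by simp [← NatIso.naturality_2 α f, hf]⟩

namespace SSet

variable {S : SSet.{u}}

lemma exists_σ_eq_of_σ_castSucc_eq_σ_succ {n : ℕ} {i j : Fin (n + 1)} (hij : i ≤ j)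
    {x y : S _⦋n + 1⦌} (h : S.σ i.castSucc y = S.σ j.succ x) :
    ∃ z, y = S.σ j z ∧ x = S.σ i z := by
  have hy : y = S.σ j (S.δ i.castSucc x) := by
    simpa only [δ_comp_σ_self_apply, δ_comp_σ_of_le_apply (Fin.castSucc_le_castSucc_iff.2 hij)]
      using congrArg (S.δ i.castSucc.castSucc) h
  refine ⟨_, hy, ?_⟩
  simpa only [δ_comp_σ_succ_apply, δ_comp_σ_of_gt_apply (Fin.castSucc_lt_succ_iff.2 hij), hy]
    using (congrArg (S.δ j.succ.succ) h).symm

namespace OneSkeletal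

variable {K X : SSet.{u}} (hK : K.OneSkeletal) (f₀ : K _⦋0⦌ → X _⦋0⦌) (f₁ : K _⦋1⦌ → X _⦋1⦌)

noncomputable def extendApp : ∀ n, K _⦋n⦌ → X _⦋n⦌ := fun n => match n with
  | 0 => f₀
  | 1 => f₁
  | n + 2 => fun x => X.σ (hK n x).choose (extendApp (n + 1) (hK n x).choose_spec.choose)

lemma exists_extendApp_eq_σ (n : ℕ) (x : K _⦋n + 2⦌) :
    ∃ (i : Fin (n + 2)) (y : K _⦋n + 1⦌), K.σ i y = x ∧
      extendApp hK f₀ f₁ (n + 2) x = X.σ i (extendApp hK f₀ f₁ (n + 1) y) :=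
  ⟨_, _, (hK n x).choose_spec.choose_spec, rfl⟩

variable {f₀ f₁}

lemma extendApp_σ (hσ : ∀ v, f₁ (K.σ 0 v) = X.σ 0 (f₀ v))
    (n : ℕ) (x : K _⦋n⦌) (j : Fin (n + 1)) :
    extendApp hK f₀ f₁ (n + 1) (K.σ j x) = X.σ j (extendApp hK f₀ f₁ n x) := by
  induction n with
  | zero => obtain rfl := Fin.fin_one_eq_zero j; exact hσ x
  | succ m ih =>
    have σ_image_eq : ∀ {i j : Fin (m + 2)} {x y : K _⦋m + 1⦌}, i < j → K.σ i y = K.σ j x →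
        X.σ i (extendApp hK f₀ f₁ (m + 1) y) = X.σ j (extendApp hK f₀ f₁ (m + 1) x) := by
      intro i j x y hij h
      obtain ⟨j, rfl⟩ := Fin.exists_succ_eq.2 (Fin.ne_zero_of_lt hij)
      obtain ⟨i, rfl⟩ := Fin.exists_castSucc_eq.2 (Fin.ne_last_of_lt hij)
      have hle := Fin.castSucc_lt_succ_iff.1 hij
      obtain ⟨z, rfl, rfl⟩ := exists_σ_eq_of_σ_castSucc_eq_σ_succ hle h
      rw [ih, ih, σ_comp_σ_apply hle]
    obtain ⟨i, y, hy, hext⟩ := exists_extendApp_eq_σ hK f₀ f₁ m (K.σ j x)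
    rw [hext]
    rcases lt_trichotomy i j with hij | rfl | hij
    · exact σ_image_eq hij hy
    · obtain rfl : y = x := by
        simpa only [δ_comp_σ_self_apply] using congrArg (K.δ i.castSucc) hy
      rfl
    · exact (σ_image_eq hij hy.symm).symm

lemma extendApp_δ (hσ : ∀ v, f₁ (K.σ 0 v) = X.σ 0 (f₀ v))
    (hδ : ∀ (i : Fin 2) (k : K _⦋1⦌), X.δ i (f₁ k) = f₀ (K.δ i k))
    (n : ℕ) (x : K _⦋n + 1⦌) (j : Fin (n + 2)) :
    extendApp hK f₀ f₁ n (K.δ j x) = X.δ j (extendApp hK f₀ f₁ (n + 1) x) := by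
  induction n with
  | zero => exact (hδ j x).symm
  | succ m ih =>
    obtain ⟨i, y, rfl, hext⟩ := exists_extendApp_eq_σ hK f₀ f₁ m x
    rw [hext]
    rcases lt_or_ge j i.castSucc with hji | hij
    · obtain ⟨i, rfl⟩ := (Fin.exists_succ_eq (x := i)).2 (by rintro rfl; simp at hji)
      obtain ⟨j, rfl⟩ := Fin.exists_castSucc_eq.2 (Fin.ne_last_of_lt hji)
      have hle : j ≤ i.castSucc := Fin.le_castSucc_iff.2 (Fin.castSucc_lt_castSucc_iff.1 hji)
      rw [δ_comp_σ_of_le_apply hle, δ_comp_σ_of_le_apply hle, extendApp_σ hK hσ, ih]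
    rcases hij.eq_or_lt with rfl | hij
    · rw [δ_comp_σ_self_apply, δ_comp_σ_self_apply]
    rcases (Fin.castSucc_lt_iff_succ_le.1 hij).eq_or_lt with rfl | hij
    · rw [δ_comp_σ_succ_apply, δ_comp_σ_succ_apply]
    obtain ⟨j, rfl⟩ := Fin.exists_succ_eq.2 (Fin.ne_zero_of_lt hij)
    have hij : i < j := Fin.succ_lt_succ_iff.1 hij
    obtain ⟨i, rfl⟩ := Fin.exists_castSucc_eq.2 (Fin.ne_last_of_lt hij)
    rw [δ_comp_σ_of_gt_apply hij, δ_comp_σ_of_gt_apply hij, extendApp_σ hK hσ, ih]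

end OneSkeletal

theorem OneSkeletal.exists_hom_extending {K X : SSet.{u}} (hK : K.OneSkeletal)
    {f₀ : K _⦋0⦌ → X _⦋0⦌} {f₁ : K _⦋1⦌ → X _⦋1⦌} (hσ : ∀ v, f₁ (K.σ 0 v) = X.σ 0 (f₀ v))
    (hδ : ∀ (i : Fin 2) (k : K _⦋1⦌), X.δ i (f₁ k) = f₀ (K.δ i k)) :
    ∃ g : K ⟶ X, (∀ v, g.app (op ⦋0⦌) v = f₀ v) ∧ ∀ k, g.app (op ⦋1⦌) k = f₁ k := by
  let app (m : SimplexCategoryᵒᵖ) : K.obj m ⟶ X.obj m := ↾(hK.extendApp f₀ f₁ m.unop.len)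
  have natural : (MorphismProperty.naturalityProperty app).unop = ⊤ :=
    SimplexCategory.morphismProperty_eq_top _
      (fun i => by ext x; exact hK.extendApp_δ hσ hδ _ x i)
      (fun i => by ext x; exact hK.extendApp_σ hσ _ x i)
  exact ⟨{ app, naturality := fun _ _ θ => natural.symm.le θ.unop trivial },
    fun _ => rfl, fun _ => rfl⟩

lemma Quasicategory.exists_compStruct [S.Quasicategory] {x₀ x₁ x₂ : S _⦋0⦌}
    (e₀₁ : Edge x₀ x₁) (e₁₂ : Edge x₁ x₂) :
    ∃ e₀₂ : Edge x₀ x₂, Nonempty (Edge.CompStruct e₀₁ e₁₂ e₀₂) := by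
  have sq := horn₂₁.isPushout.{u}
  have hc : stdSimplex.δ (0 : Fin 2) ≫ yonedaEquiv.symm e₀₁.edge
      = stdSimplex.δ (1 : Fin 2) ≫ yonedaEquiv.symm e₁₂.edge := by
    rw [stdSimplex.δ_comp_yonedaEquiv_symm, stdSimplex.δ_comp_yonedaEquiv_symm,
      e₀₁.tgt_eq, e₁₂.src_eq]
  obtain ⟨σ, hσ⟩ := Quasicategory.hornFilling (n := 2) (i := 1) (by decide) (by decide)
    (sq.desc _ _ hc)
  have d₂ : S.δ 2 (yonedaEquiv σ) = e₀₁.edge := by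
    rw [← stdSimplex.yonedaEquiv_δ_comp, ← horn.ι_ι_assoc 1 2 (by decide), ← hσ,
      sq.inl_desc, Equiv.apply_symm_apply]
  have d₀ : S.δ 0 (yonedaEquiv σ) = e₁₂.edge := by
    rw [← stdSimplex.yonedaEquiv_δ_comp, ← horn.ι_ι_assoc 1 0 (by decide), ← hσ,
      sq.inr_desc, Equiv.apply_symm_apply]
  generalize yonedaEquiv σ = w at d₂ d₀
  refine ⟨Edge.mk (S.δ 1 w) ?_ ?_, ⟨Edge.CompStruct.mk w d₂ d₀ rfl⟩⟩
  · rw [show S.δ 1 (S.δ 1 w) = S.δ 1 (S.δ 2 w) from δ_comp_δ_self_apply (i := (1 : Fin 2)) w,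
      d₂, e₀₁.src_eq]
  · rw [show S.δ 0 (S.δ 1 w) = S.δ 0 (S.δ 0 w) from δ_comp_δ_apply (i := (0 : Fin 2)) le_rfl w,
      d₀, e₁₂.tgt_eq]

namespace Truncated.HomotopyCategory

variable {V : Truncated.{u} 2}

lemma mk_injective : Function.Injective (mk (V := V)) :=
  fun _ _ h => congrArg (fun x => x.as.as) h

lemma functor_ext_of_arrowMk {D : Type*} [Category* D] {F G : V.HomotopyCategory ⥤ D}
    (h : ∀ ⦃x y⦄ (e : V.Edge x y), Arrow.mk (F.map (homMk e)) = Arrow.mk (G.map (homMk e))) :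
    F = G := by
  have hobj x : F.obj (mk x) = G.obj (mk x) := by
    simpa using congrArg Arrow.left (h (.id x))
  refine functor_ext hobj fun x y e => ?_
  obtain ⟨_, _, he⟩ := (Arrow.mk_eq_mk_iff _ _).1 (h e)
  exact he

lemma arrowMk_homMk_σ (x : S _⦋0⦌) :
    Arrow.mk (homMk (SSet.Edge.mk' (S.σ 0 x)).toTruncated) =
      Arrow.mk (𝟙 (mk (V := (truncation 2).obj S) x)) :=
  (congr_arrowMk_homMk (SSet.Edge.mk' (S.σ 0 x)).toTruncated (SSet.Edge.id x).toTruncated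
    rfl).trans (congrArg Arrow.mk (homMk_id _))

end Truncated.HomotopyCategory

open Truncated.HomotopyCategory

lemma Quasicategory.homMk_surjective [S.Quasicategory] {x y : S _⦋0⦌} :
    Function.Surjective (homMk (V := (truncation 2).obj S) (x₀ := x) (x₁ := y)) := by
  let W : MorphismProperty ((truncation 2).obj S).HomotopyCategory :=
    fun a b φ => ∃ e : ((truncation 2).obj S).Edge a.as.as b.as.as, homMk e = φ
  have : W.IsMultiplicative :=
    { id_mem a := ⟨.id _, homMk_id _⟩
      comp_mem := by
        rintro _ _ _ _ _ ⟨e, rfl⟩ ⟨e', rfl⟩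
        obtain ⟨e'', ⟨c⟩⟩ := exists_compStruct (Edge.ofTruncated e) (Edge.ofTruncated e')
        exact ⟨e'', (homMk_comp_homMk c.toTruncated).symm⟩ }
  intro φ
  exact (morphismProperty_eq_top (W := W) fun e => ⟨e, rfl⟩).symm.le φ trivial

lemma Quasicategory.exists_arrowMk_homMk_eq [S.Quasicategory]
    (φ : Arrow ((truncation 2).obj S).HomotopyCategory) :
    ∃ s : S _⦋1⦌, Arrow.mk (homMk (Edge.mk' s).toTruncated) = φ := by
  obtain ⟨x, y, φ⟩ := φ
  induction x using Truncated.HomotopyCategory.cases_on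
  induction y using Truncated.HomotopyCategory.cases_on
  obtain ⟨e, rfl⟩ := homMk_surjective φ
  exact ⟨e.edge, congr_arrowMk_homMk _ _ rfl⟩

section Lifting

variable {K 𝒞 : SSet.{u}}
  (U : ((truncation 2).obj K).HomotopyCategory ⥤ ((truncation 2).obj 𝒞).HomotopyCategory)
  {f₀ : K _⦋0⦌ → 𝒞 _⦋0⦌}

lemma exists_arrowMk_homMk_eq_mapArrow_obj [𝒞.Quasicategory]
    (hf₀ : ∀ v, mk (f₀ v) = U.obj (mk v)) (k : K _⦋1⦌) :
    ∃ s : 𝒞 _⦋1⦌, Arrow.mk (homMk (Edge.mk' s).toTruncated) =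
        U.mapArrow.obj (Arrow.mk (homMk (Edge.mk' k).toTruncated)) ∧
      ∀ v, K.σ 0 v = k → s = 𝒞.σ 0 (f₀ v) := by
  by_cases hk : ∃ v, K.σ 0 v = k
  · obtain ⟨v, rfl⟩ := hk
    have hσ₀ : ∀ w, K.σ 0 w = K.σ 0 v → w = v := fun w h => by
      simpa only [δ_comp_σ_self'_apply (show (0 : Fin 2) = Fin.castSucc 0 from rfl)]
        using congrArg (K.δ 0) h
    refine ⟨_, ?_, fun w hw => by rw [hσ₀ w hw]⟩
    calc _ = Arrow.mk (𝟙 (mk (f₀ v))) := arrowMk_homMk_σ _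
      _ = Arrow.mk (𝟙 (U.obj (mk v))) := congrArg (fun x => Arrow.mk (𝟙 x)) (hf₀ v)
      _ = U.mapArrow.obj (Arrow.mk (𝟙 (mk v))) := congrArg Arrow.mk (U.map_id _).symm
      _ = _ := congrArg U.mapArrow.obj (arrowMk_homMk_σ v).symm
  · obtain ⟨s, hs⟩ := Quasicategory.exists_arrowMk_homMk_eq
      (U.mapArrow.obj (Arrow.mk (homMk (Edge.mk' k).toTruncated)))
    exact ⟨s, hs, fun v hv => absurd ⟨v, hv⟩ hk⟩

lemma δ_eq_of_arrowMk_homMk_eq (hf₀ : ∀ v, mk (f₀ v) = U.obj (mk v)) {s : 𝒞 _⦋1⦌}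
    {k : K _⦋1⦌} (h : Arrow.mk (homMk (Edge.mk' s).toTruncated) =
      U.mapArrow.obj (Arrow.mk (homMk (Edge.mk' k).toTruncated))) (i : Fin 2) :
    𝒞.δ i s = f₀ (K.δ i k) := by
  fin_cases i
  · exact mk_injective ((congrArg Arrow.right h).trans (hf₀ _).symm)
  · exact mk_injective ((congrArg Arrow.left h).trans (hf₀ _).symm)

end Lifting

theorem hoFunctor_map_surjective_of_oneSkeletal {K 𝒞 : SSet.{u}} [𝒞.Quasicategory]
    (hK : K.OneSkeletal) : Function.Surjective (hoFunctor.map : (K ⟶ 𝒞) → _) := by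
  intro u
  choose f₀ hf₀ using fun v => mk_surjective (u.toFunctor.obj (mk v))
  choose f₁ hf₁ hσ using exists_arrowMk_homMk_eq_mapArrow_obj u.toFunctor hf₀
  obtain ⟨g, -, hg₁⟩ := hK.exists_hom_extending (fun v => hσ _ v rfl)
    (fun i k => δ_eq_of_arrowMk_homMk_eq u.toFunctor hf₀ (hf₁ k) i)
  refine ⟨g, Cat.Hom.ext (functor_ext_of_arrowMk fun x y e => ?_)⟩
  have hg : Arrow.mk (homMk (e.map ((truncation 2).map g))) =
      Arrow.mk (homMk (Edge.mk' (f₁ e.edge)).toTruncated) :=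
    congr_arrowMk_homMk _ _ (hg₁ e.edge)
  have he : Arrow.mk (homMk (Edge.mk' e.edge).toTruncated) = Arrow.mk (homMk e) :=
    congr_arrowMk_homMk _ _ rfl
  exact hg.trans ((hf₁ e.edge).trans (congrArg u.toFunctor.mapArrow.obj he))

end SSet

/-- Let `𝒞` be a quasi-category and `K` a 1-skeletal simplicial set.
Then every functor `u : hK ⥤ h𝒞` is of the form `h(f)` for some simplicial map
`f : K ⟶ 𝒞`; that is, the comparison map from simplicial maps `K ⟶ 𝒞` to functors
`hK ⥤ h𝒞` is surjective. -/
theorem surjective_homotopyFunctor_of_oneSkeletal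
    (h : SSet.{u} ⥤ Cat.{u, u}) (adj : h ⊣ nerveFunctor.{u, u})
    (𝒞 K : SSet.{u}) [SSet.Quasicategory 𝒞] (hK : K.OneSkeletal) :
    ∀ u : h.obj K ⟶ h.obj 𝒞, ∃ f : K ⟶ 𝒞, h.map f = u :=
  Functor.map_surjective_of_iso (adj.leftAdjointUniq nerveAdjunction)
    (SSet.hoFunctor_map_surjective_of_oneSkeletal hK)
end

section
/- Let 𝒞 be the free category on the quiver with four vertices A, B, C, D and three arrows u : A → B, v : C → B, w : C → D, and let W be the class of weak equivalences consisting of all identities together with the arrow v. Then the localization 𝒞[W⁻¹] is equivalent to the poset category [2] = {0 < 1 < 2}, via a functor sending A to 0, B and C to 1, and D to 2, and sending u and w to the generating arrows 0 → 1 and 1 → 2. -/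
/-!
`φ` sends `v` to an identity, so it inverts `W`. Conversely, any functor `F` inverting `W`
factors through `φ` up to isomorphism, via the diagram `F u` and `(F v)⁻¹ ≫ F w` in the target.
Since `[2]` is thin and `φ` is surjective on objects, this weak universal property already makes
`φ` a localization functor, and uniqueness of localizations gives the equivalence.
-/

open CategoryTheory

namespace FreeZigzag

/-- The four vertices `A, B, C, D`. -/
inductive V : Type
  | A | B | C | D

/-- The three arrows `u : A ⟶ B`, `v : C ⟶ B` and `w : C ⟶ D`. -/
inductive E : V → V → Type
  | u : E .A .B
  | v : E .C .B
  | w : E .C .D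

instance : Quiver V := ⟨E⟩

/-- The weak equivalences: all identities together with the arrow `v`. -/
inductive Wrel : ∀ {X Y : Paths V}, (X ⟶ Y) → Prop
  | id (X : Paths V) : Wrel (𝟙 X)
  | v : Wrel (Quiver.Hom.toPath E.v)

/-- The weak equivalences, as a morphism property of the free category on the quiver. -/
def W : MorphismProperty (Paths V) := fun _ _ f => Wrel f

/-- The prefunctor to `[2] = {0 < 1 < 2}` sending `A ↦ 0`, `B, C ↦ 1`, `D ↦ 2`,
`u` and `w` to the generating arrows and `v` to the identity. -/
def φq : Prefunctor V (Fin 3) where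
  obj x := match x with
    | .A => 0
    | .B => 1
    | .C => 1
    | .D => 2
  map e := match e with
    | .u => homOfLE (by decide)
    | .v => homOfLE (by decide)
    | .w => homOfLE (by decide)

/-- The induced functor on the free category. -/
def φ : Paths V ⥤ Fin 3 := Paths.lift φq

end FreeZigzag

namespace CategoryTheory.Functor

theorem isLocalization_of_isThin_of_essSurj {C D D' : Type*} [Category C] [Category D]
    [Category D'] [Quiver.IsThin D] (L : C ⥤ D) (W : MorphismProperty C)
    (hL : W.IsInvertedBy L) [L.EssSurj] (L' : C ⥤ D') [L'.IsLocalization W] (G : D ⥤ D')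
    (e : L ⋙ G ≅ L') : L.IsLocalization W := by
  let F := Localization.lift L hL L'
  let fac : L' ⋙ F ≅ L := Localization.fac L hL L'
  let : Localization.Lifting L' W L' (F ⋙ G) :=
    ⟨(associator _ _ _).symm ≪≫ isoWhiskerRight fac G ≪≫ e⟩
  have unitIso : 𝟭 D' ≅ F ⋙ G := Localization.liftNatIso L' W L' L' (𝟭 D') (F ⋙ G) (Iso.refl _)
  have counitIso : G ⋙ F ≅ 𝟭 D := NatIso.ofComponents
    (fun d ↦ (G ⋙ F).mapIso (L.objObjPreimageIso d).symm ≪≫ F.mapIso (e.app _) ≪≫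
      fac.app _ ≪≫ L.objObjPreimageIso d)
    (fun _ ↦ Subsingleton.elim _ _)
  exact IsLocalization.of_equivalence_target L' W L (Equivalence.mk F G unitIso counitIso) fac

end CategoryTheory.Functor

namespace FreeZigzag

open Category

lemma φ_inverts : W.IsInvertedBy φ := by
  rintro _ _ _ (_ | _)
  · rw [φ.map_id]
    infer_instance
  · exact (iso_of_both_ways _ (𝟙 (1 : Fin 3))).isIso_hom

instance : φ.EssSurj where
  mem_essImage i := by
    fin_cases i
    exacts [φ.obj_mem_essImage V.A, φ.obj_mem_essImage V.B, φ.obj_mem_essImage V.D]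

section

variable {D : Type*} [Category D] (F : Paths V ⥤ D) [IsIso (F.map (Quiver.Hom.toPath E.v))]

noncomputable def zigzagLift : Fin 3 ⥤ D :=
  ComposableArrows.mk₂ (F.map (Quiver.Hom.toPath E.u))
    (inv (F.map (Quiver.Hom.toPath E.v)) ≫ F.map (Quiver.Hom.toPath E.w))

lemma zigzagLift_map_φ_map_u :
    (zigzagLift F).map (φ.map (Quiver.Hom.toPath E.u)) = F.map (Quiver.Hom.toPath E.u) :=
  congrArg (zigzagLift F).map (Subsingleton.elim _ (homOfLE (by decide)))

lemma zigzagLift_map_φ_map_v : (zigzagLift F).map (φ.map (Quiver.Hom.toPath E.v)) = 𝟙 _ :=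
  (congrArg (zigzagLift F).map (Subsingleton.elim _ (𝟙 _))).trans ((zigzagLift F).map_id _)

lemma zigzagLift_map_φ_map_w : (zigzagLift F).map (φ.map (Quiver.Hom.toPath E.w)) =
    inv (F.map (Quiver.Hom.toPath E.v)) ≫ F.map (Quiver.Hom.toPath E.w) :=
  congrArg (zigzagLift F).map (Subsingleton.elim _ (homOfLE (by decide)))

noncomputable def φCompZigzagLiftIso : φ ⋙ zigzagLift F ≅ F :=
  Paths.liftNatIso
    (fun
      | .A => Iso.refl _
      | .B => Iso.refl _
      | .C => (asIso (F.map (Quiver.Hom.toPath E.v))).symm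
      | .D => Iso.refl _)
    (by
      rintro _ _ (_ | _ | _)
      · exact (comp_id _).trans ((zigzagLift_map_φ_map_u F).trans (id_comp _).symm)
      · exact (comp_id _).trans
          ((zigzagLift_map_φ_map_v F).trans (IsIso.inv_hom_id (F.map (Quiver.Hom.toPath E.v))).symm)
      · exact (comp_id _).trans (zigzagLift_map_φ_map_w F))

end

instance φ_isLocalization : φ.IsLocalization W :=
  have : IsIso (W.Q.map (Quiver.Hom.toPath E.v)) := Localization.inverts W.Q W _ .v
  Functor.isLocalization_of_isThin_of_essSurj φ W φ_inverts W.Q (zigzagLift W.Q)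
    (φCompZigzagLiftIso W.Q)

/-- Let `𝒞` be the free category on the quiver with vertices
`A, B, C, D` and arrows `u : A ⟶ B`, `v : C ⟶ B`, `w : C ⟶ D`, with weak equivalences
`W` the identities together with `v`. Then any localization of `𝒞` at `W` is equivalent
to the poset `[2] = {0 < 1 < 2}`, via an equivalence under which the localization functor
becomes the functor sending `A ↦ 0`, `B, C ↦ 1`, `D ↦ 2`, and `u`, `w` to the generating
arrows `0 ⟶ 1` and `1 ⟶ 2`. -/
theorem localization_equiv_fin3
    {D : Type*} [Category D] (L : Paths V ⥤ D) [L.IsLocalization W] :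
    ∃ G : D ⥤ Fin 3, G.IsEquivalence ∧ Nonempty (L ⋙ G ≅ φ) :=
  ⟨(Localization.uniq L φ W).functor, inferInstance, ⟨Localization.compUniqFunctor L φ W⟩⟩

end FreeZigzag
end

section
/- Let 𝒞 be the free category on the quiver with four vertices A, B, C, D and three arrows u : A → B, v : C → B, w : C → D, let W consist of all identities together with v, let W^{[1]} denote the class of levelwise W-morphisms in the arrow category 𝒞^{[1]}, and let diag : 𝒞^{[1]}[(W^{[1]})⁻¹] → (𝒞[W⁻¹])^{[1]} be the canonical functor induced by the two evaluation functors and the comparison of localizations. Then the object of (𝒞[W⁻¹])^{[1]} given by the composite morphism γ(w)∘γ(v)⁻¹∘γ(u) : A → D (where γ : 𝒞 → 𝒞[W⁻¹] is the localization functor) is not in the essential image of diag; in particular diag is not essentially surjective. -/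
/-!
Grade the objects by `A ↦ 0`, `B, C ↦ 1`, `D ↦ 2`. The arrows `u` and `w` raise the grade and
the only nonidentity weak equivalence `v` preserves it, so the grade descends to `𝒞[W⁻¹]`: an
object isomorphic to `γ A` (resp. `γ D`) there is `A` (resp. `D`) itself. Every object of
`𝒞^[1][(W^[1])⁻¹]` comes from an arrow of `𝒞`, so an object of the essential image of `diag`
with source `γ A` and target `γ D` comes from an arrow `A ⟶ D` of `𝒞`, and there is none.
-/

open CategoryTheory

namespace FreeZigzag

/-- The levelwise weak equivalences on the arrow category. -/
def Wsq : MorphismProperty (Arrow (Paths V)) := fun _ _ φ => W φ.left ∧ W φ.right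

end FreeZigzag

namespace CategoryTheory.Localization

theorem obj_eq_of_iso {C D T : Type*} [Category C] [Category D] [PartialOrder T]
    (L : C ⥤ D) (W : MorphismProperty C) [L.IsLocalization W] {F : C ⥤ T}
    (hF : W.IsInvertedBy F) {X Y : C} (e : L.obj X ≅ L.obj Y) : F.obj X = F.obj Y :=
  ((fac F hF L).symm.app X ≪≫ (lift F hF L).mapIso e ≪≫ (fac F hF L).app Y).to_eq

end CategoryTheory.Localization

namespace FreeZigzag

def grade : Paths V ⥤ ℕ := Paths.lift
  { obj := fun | .A => 0 | .B => 1 | .C => 1 | .D => 2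
    map := fun | .u => homOfLE (by decide) | .v => homOfLE le_rfl | .w => homOfLE (by decide) }

theorem W_isInvertedBy_grade : W.IsInvertedBy grade := by
  rintro _ _ _ (_ | _)
  · infer_instance
  · exact ⟨⟨homOfLE le_rfl, rfl, rfl⟩⟩

theorem eq_A_of_grade_obj_eq_zero {X : Paths V} (h : grade.obj X = 0) :
    X = (V.A : Paths V) := by
  cases (X : V) <;> first | rfl | exact absurd h (by decide)

theorem eq_D_of_grade_obj_eq_two {X : Paths V} (h : grade.obj X = 2) :
    X = (V.D : Paths V) := by
  cases (X : V) <;> first | rfl | exact absurd h (by decide)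

theorem isEmpty_path_A_D : IsEmpty (Quiver.Path V.A V.D) := by
  constructor
  rintro (_ | ⟨_ | ⟨_, ⟨⟩⟩, ⟨⟩⟩)

theorem arrow_notMem_essImage_mapArrow {D : Type*} [Category D] (L : Paths V ⥤ D)
    [L.IsLocalization W] (f : L.obj (V.A : Paths V) ⟶ L.obj (V.D : Paths V)) :
    ¬ L.mapArrow.essImage (Arrow.mk f) := by
  rintro ⟨⟨X, Y, g⟩, ⟨e⟩⟩
  obtain rfl : X = (V.A : Paths V) := eq_A_of_grade_obj_eq_zero
    (Localization.obj_eq_of_iso L W W_isInvertedBy_grade (Arrow.leftFunc.mapIso e))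
  obtain rfl : Y = (V.D : Paths V) := eq_D_of_grade_obj_eq_two
    (Localization.obj_eq_of_iso L W W_isInvertedBy_grade (Arrow.rightFunc.mapIso e))
  exact isEmpty_path_A_D.false g

/-- With `𝒞` the free category on `u : A ⟶ B ⟵ C : v`, `w : C ⟶ D` and
`W` the identities together with `v`, let `L : 𝒞 ⥤ D` be a localization at `W`, let
`L₁ : 𝒞^[1] ⥤ D₁` be a localization of the arrow category at the levelwise weak
equivalences, and let `diag : D₁ ⥤ D^[1]` be the canonical functor, i.e. any functor
commuting with the localization functors and the evaluation-induced functor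
`𝒞^[1] ⥤ D^[1]`. Then the object `L(u) ≫ L(v)⁻¹ ≫ L(w) : A ⟶ D` of the arrow category
of the localization is not in the essential image of `diag`; in particular `diag` is not
essentially surjective. -/
theorem not_essSurj_diag
    {D : Type*} [Category D] (L : Paths V ⥤ D) [L.IsLocalization W]
    {D₁ : Type*} [Category D₁] (L₁ : Arrow (Paths V) ⥤ D₁) [L₁.IsLocalization Wsq]
    (diag : D₁ ⥤ Arrow D) (hdiag : L₁ ⋙ diag = L.mapArrow)
    [IsIso (L.map (Quiver.Hom.toPath E.v))] :
    (¬ ∃ X : D₁, Nonempty (diag.obj X ≅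
      Arrow.mk (L.map (Quiver.Hom.toPath E.u) ≫ inv (L.map (Quiver.Hom.toPath E.v)) ≫
        L.map (Quiver.Hom.toPath E.w)))) ∧
    ¬ diag.EssSurj := by
  have : L₁.EssSurj := Localization.essSurj L₁ Wsq
  have notMem : ¬ diag.essImage (Arrow.mk (L.map (Quiver.Hom.toPath E.u) ≫
      inv (L.map (Quiver.Hom.toPath E.v)) ≫ L.map (Quiver.Hom.toPath E.w))) := by
    rw [← Functor.essImage_comp_of_essSurj (F := L₁), hdiag]
    exact arrow_notMem_essImage_mapArrow L _
  exact ⟨notMem, fun _ => notMem (Functor.EssSurj.mem_essImage _ _)⟩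

end FreeZigzag
end

section
/- Let K be a 1-skeletal simplicial set, so that morphisms of hK are identified with paths of nondegenerate edges of K, and define the rank of a morphism of hK to be its path length and the rank of a simplex of N(hK) to be the rank of its long edge (its restriction along [1] → [r], 0 ↦ 0, 1 ↦ r; for a 0-simplex the rank is 0). Call an n-simplex τ of N(hK) primitive if for each 0 ≤ i < n the edge τ|Δ^{{i,i+1}} is the class of a single nondegenerate edge of K. Then every r-simplex σ of N(hK) of rank n admits a unique factorization σ = f*τ where τ is a primitive n-simplex of N(hK) and f : [r] → [n] is a monotone map. -/
open CategoryTheory Simplicial Opposite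

universe u

namespace SSetPaper

/-- For a 1-skeletal simplicial set `K`, the homotopy category `hK` is the path category
of the quiver of nondegenerate edges; morphisms are paths of nondegenerate edges. -/
abbrev HK (K : SSet.{u}) := Paths (EdgeQuiver K)

/-- The rank of a simplex of the nerve of `hK`: the path length of its long edge. -/
def rank (K : SSet.{u}) {r : ℕ} (σ : ComposableArrows (HK K) r) : ℕ :=
  Quiver.Path.length (σ.map' 0 r (by omega) (by omega))

/-- A simplex `τ` of the nerve of `hK` is primitive if each of its consecutive edges
`τ|Δ^{i,i+1}` is (the class of) a single nondegenerate edge of `K`, i.e. has rank 1. -/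
def Primitive (K : SSet.{u}) {n : ℕ} (τ : ComposableArrows (HK K) n) : Prop :=
  ∀ (i : ℕ) (hi : i < n),
    Quiver.Path.length (τ.map' i (i+1) (by omega) (by omega)) = 1

end SSetPaper

/-! A path of length `n` splits in exactly one way into a first piece of prescribed length and the
rest. Hence a simplex `σ` of the nerve of a path category is determined by its long edge together
with the lengths of its prefix edges `σ|[0,i]`. The primitive simplex `τ` is the string of single
edges of the long edge of `σ`, and `f i` is the length of `σ|[0,i]`. Conversely, if `σ = f^* τ'`
with `τ'` primitive, then `σ|[i,j]` has length `f j - f i`; the long edge has length `n`, so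
`f 0 = 0` and `f r = n`, which pins down `f`, and then `τ'` has the same long edge as `τ`. -/

open Quiver

theorem Quiver.Path.obj_eq_of_comp_eq_comp {V : Type*} [Quiver V] {a b b' c : V}
    {p : Path a b} {q : Path b c} {p' : Path a b'} {q' : Path b' c}
    (h : p.comp q = p'.comp q') (hl : p.length = p'.length) : b = b' := by
  have hb := vertices_comp_get_length_eq p q
  have hb' := vertices_comp_get_length_eq p' q'
  simp only [List.get_eq_getElem, h, hl] at hb
  exact hb.symm.trans hb'

namespace CategoryTheory

theorem Paths.arrowMk_eq_of_arrowMk_comp_eq {V : Type*} [Quiver V]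
    {X Y Z X' Y' Z' : Paths V} (f : X ⟶ Y) (g : Y ⟶ Z) (f' : X' ⟶ Y') (g' : Y' ⟶ Z')
    (h : Arrow.mk (f ≫ g) = Arrow.mk (f' ≫ g')) (hl : Path.length f = Path.length f') :
    Arrow.mk f = Arrow.mk f' ∧ Arrow.mk g = Arrow.mk g' := by
  obtain ⟨rfl, rfl, h⟩ := (Arrow.mk_eq_mk_iff _ _).1 h
  simp only [eqToHom_refl, Category.id_comp, Category.comp_id] at h
  change Path.comp f g = Path.comp f' g' at h
  obtain rfl := Path.obj_eq_of_comp_eq_comp h hl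
  obtain ⟨rfl, rfl⟩ := (Path.comp_inj' hl).1 h
  exact ⟨rfl, rfl⟩

namespace ComposableArrows

theorem arrowMk_map'_nerve_map {C : Type*} [Category C] {r n : ℕ}
    (τ : ComposableArrows C n) (f : ⦋r⦌ ⟶ ⦋n⦌) (h₀ : f.toOrderHom 0 = 0)
    (hr : f.toOrderHom (Fin.last r) = Fin.last n) :
    Arrow.mk (((nerve C).map f.op τ).map' 0 r (Nat.zero_le r) le_rfl) =
      Arrow.mk (τ.map' 0 n) := by
  have key : ∀ (a b : Fin (n + 1)) (hab : a ≤ b), a = 0 → b = Fin.last n →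
      Arrow.mk (τ.map (homOfLE hab)) = Arrow.mk (τ.map' 0 n) := by
    rintro a b hab rfl rfl
    rfl
  exact key _ _ _ h₀ hr

section Paths

variable {V : Type*} [Quiver V]

/-- `SSetPaper.Primitive K` is `IsPrimitive` for the quiver `SSetPaper.EdgeQuiver K`. -/
def IsPrimitive {n : ℕ} (τ : ComposableArrows (Paths V) n) : Prop :=
  ∀ i (hi : i < n), Path.length (τ.map' i (i + 1)) = 1

theorem length_map'_eq_add {n : ℕ} (F : ComposableArrows (Paths V) n) (i j k : ℕ)
    (hij : i ≤ j := by omega) (hjk : j ≤ k := by omega) (hk : k ≤ n := by omega) :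
    Path.length (F.map' i k (hij.trans hjk) hk) =
      Path.length (F.map' i j hij (hjk.trans hk)) + Path.length (F.map' j k hjk hk) := by
  rw [F.map'_comp i j k hij hjk hk]
  exact Path.length_comp _ _

theorem ext_of_length_map' {m : ℕ} {F G : ComposableArrows (Paths V) m}
    (hlong : Arrow.mk (F.map' 0 m) = Arrow.mk (G.map' 0 m))
    (hlen : ∀ i (hi : i ≤ m), Path.length (F.map' 0 i) = Path.length (G.map' 0 i)) :
    F = G := by
  have hsplit : ∀ i (hi : i ≤ m), Arrow.mk (F.map' 0 i) = Arrow.mk (G.map' 0 i) ∧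
      Arrow.mk (F.map' i m) = Arrow.mk (G.map' i m) := fun i hi =>
    Paths.arrowMk_eq_of_arrowMk_comp_eq _ _ _ _
      (by rwa [← F.map'_comp 0 i m, ← G.map'_comp 0 i m]) (hlen i hi)
  refine ComposableArrows.ext (fun i => congrArg Arrow.right (hsplit i (by omega)).1)
    fun i hi => ?_
  have hlen_succ : Path.length (F.map' i (i + 1)) = Path.length (G.map' i (i + 1)) := by
    have := hlen (i + 1) hi
    rw [length_map'_eq_add F 0 i (i + 1), length_map'_eq_add G 0 i (i + 1), hlen i] at this
    omega
  obtain ⟨_, _, h⟩ := (Arrow.mk_eq_mk_iff _ _).1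
    (Paths.arrowMk_eq_of_arrowMk_comp_eq _ _ _ _
      (by rw [← F.map'_comp i (i + 1) m, ← G.map'_comp i (i + 1) m]; exact (hsplit i hi.le).2)
      hlen_succ).1
  exact h

theorem IsPrimitive.length_map' {n : ℕ} {τ : ComposableArrows (Paths V) n} (hτ : IsPrimitive τ)
    (i j : ℕ) (hij : i ≤ j) (hj : j ≤ n) : Path.length (τ.map' i j hij hj) = j - i := by
  induction j, hij using Nat.le_induction with
  | base => rw [τ.map'_self i, Nat.sub_self]; rfl
  | succ j hij ih =>
    rw [length_map'_eq_add τ i j (j + 1), ih (by omega), hτ j hj]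
    omega

theorem IsPrimitive.ext {n : ℕ} {τ τ' : ComposableArrows (Paths V) n} (hτ : IsPrimitive τ)
    (hτ' : IsPrimitive τ') (h : Arrow.mk (τ.map' 0 n) = Arrow.mk (τ'.map' 0 n)) : τ = τ' :=
  ext_of_length_map' h fun i hi => by rw [hτ.length_map', hτ'.length_map']

theorem exists_isPrimitive_arrowMk_eq {n : ℕ} {X Y : Paths V} (p : X ⟶ Y)
    (hp : Path.length p = n) :
    ∃ τ : ComposableArrows (Paths V) n,
      IsPrimitive τ ∧ Arrow.mk (τ.map' 0 n) = Arrow.mk p := by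
  induction n generalizing X with
  | zero =>
    obtain rfl := Path.eq_of_length_zero p hp
    obtain rfl := Path.eq_nil_of_length_zero p hp
    exact ⟨mk₀ X, nofun, by rw [map'_self _ 0]; rfl⟩
  | succ n ih =>
    obtain ⟨c, e, q, hq, rfl⟩ := Path.eq_toPath_comp_of_length_eq_succ p hp
    obtain ⟨τ, hτ, hτq⟩ := ih q hq
    obtain ⟨rfl, rfl, hτq⟩ := (Arrow.mk_eq_mk_iff _ _).1 hτq
    simp only [eqToHom_refl, Category.id_comp, Category.comp_id] at hτq
    refine ⟨τ.precomp e.toPath, fun i hi => ?_, ?_⟩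
    · cases i with
      | zero => rfl
      | succ i => exact hτ i (by omega)
    · rw [map'_comp _ 0 1 (n + 1)]
      change Arrow.mk (e.toPath ≫ τ.map' 0 n) = _
      rw [hτq]
      rfl

theorem IsPrimitive.length_map'_nerve_map {r n : ℕ} {τ : ComposableArrows (Paths V) n}
    (hτ : IsPrimitive τ) (f : ⦋r⦌ ⟶ ⦋n⦌) (j : Fin (r + 1)) :
    Path.length (((nerve (Paths V)).map f.op τ).map' 0 j j.zero_le j.is_le) =
      f.toOrderHom j - f.toOrderHom 0 :=
  hτ.length_map' _ _ (f.toOrderHom.monotone (Fin.zero_le _)) (Fin.is_le _)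

def prefixLengthHom {r n : ℕ} (σ : ComposableArrows (Paths V) r)
    (hσ : Path.length (σ.map' 0 r) = n) : ⦋r⦌ ⟶ ⦋n⦌ :=
  SimplexCategory.mkHom
    { toFun i := ⟨Path.length (σ.map' 0 i), by
        have := length_map'_eq_add σ 0 i r
        omega⟩
      monotone' i j hij := by
        have := length_map'_eq_add σ 0 i j (by omega) hij
        simp only [Fin.mk_le_mk]
        omega }

theorem prefixLengthHom_zero {r n : ℕ} (σ : ComposableArrows (Paths V) r)
    (hσ : Path.length (σ.map' 0 r) = n) : (prefixLengthHom σ hσ).toOrderHom 0 = 0 := by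
  ext
  exact congrArg Path.length (σ.map'_self 0)

theorem prefixLengthHom_last {r n : ℕ} (σ : ComposableArrows (Paths V) r)
    (hσ : Path.length (σ.map' 0 r) = n) :
    (prefixLengthHom σ hσ).toOrderHom (Fin.last r) = Fin.last n :=
  Fin.ext hσ

theorem IsPrimitive.eq_prefixLengthHom {r n : ℕ} {τ : ComposableArrows (Paths V) n}
    (hτ : IsPrimitive τ) (f : ⦋r⦌ ⟶ ⦋n⦌)
    (h : Path.length (((nerve (Paths V)).map f.op τ).map' 0 r (Nat.zero_le r) le_rfl) = n) :
    f = prefixLengthHom _ h := by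
  have hlen := hτ.length_map'_nerve_map f
  have h₀ : (f.toOrderHom 0 : ℕ) = 0 := by
    have hr : (f.toOrderHom (Fin.last r) : ℕ) - f.toOrderHom 0 = n :=
      (hlen (Fin.last r)).symm.trans h
    have hle : (f.toOrderHom (Fin.last r) : ℕ) ≤ n := Fin.is_le _
    have hmono : f.toOrderHom 0 ≤ f.toOrderHom (Fin.last r) :=
      f.toOrderHom.monotone (Fin.zero_le _)
    omega
  ext i : 3
  apply Fin.ext
  have := hlen i
  rw [h₀, Nat.sub_zero] at this
  exact this.symm

end Paths

end ComposableArrows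

end CategoryTheory

namespace SSetPaper

open ComposableArrows

theorem exists_unique_primitive_factorization_general
    (K : SSet.{u}) {r n : ℕ}
    (σ : ComposableArrows (HK K) r) (hrank : rank K σ = n) :
    ∃ (τ : ComposableArrows (HK K) n) (f : (⦋r⦌ : SimplexCategory) ⟶ ⦋n⦌),
      Primitive K τ ∧ σ = (nerve (HK K)).map f.op τ ∧
      ∀ (τ' : ComposableArrows (HK K) n) (f' : (⦋r⦌ : SimplexCategory) ⟶ ⦋n⦌),
        Primitive K τ' → σ = (nerve (HK K)).map f'.op τ' → τ' = τ ∧ f' = f := by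
  unfold rank at hrank
  obtain ⟨τ, hτ, hτσ⟩ := exists_isPrimitive_arrowMk_eq (σ.map' 0 r) hrank
  have hlong := arrowMk_map'_nerve_map τ _ (prefixLengthHom_zero σ hrank)
    (prefixLengthHom_last σ hrank)
  refine ⟨τ, prefixLengthHom σ hrank, hτ, ext_of_length_map' (hτσ.symm.trans hlong.symm)
    fun i hi => ?_, ?_⟩
  · rw [hτ.length_map'_nerve_map _ ⟨i, by omega⟩, prefixLengthHom_zero]
    rfl
  · rintro τ' f' hτ' rfl
    have hf' := IsPrimitive.eq_prefixLengthHom hτ' f' hrank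
    refine ⟨IsPrimitive.ext hτ' hτ ?_, hf'⟩
    refine (arrowMk_map'_nerve_map τ' f' ?_ ?_).symm.trans hτσ.symm
    · rw [hf']
      exact prefixLengthHom_zero _ _
    · rw [hf']
      exact prefixLengthHom_last _ _

/-- Let `K` be a 1-skeletal simplicial set, so that `hK` is the path
category of the quiver of nondegenerate edges of `K`. Then every `r`-simplex `σ` of
`N(hK)` of rank `n` admits a unique factorization `σ = f^* τ` with `τ` a primitive
`n`-simplex of `N(hK)` and `f : [r] ⟶ [n]` a monotone map. -/
theorem exists_unique_primitive_factorization
    (K : SSet.{u}) (hK : K.OneSkeletal) {r n : ℕ}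
    (σ : ComposableArrows (HK K) r) (hrank : rank K σ = n) :
    ∃ (τ : ComposableArrows (HK K) n) (f : (⦋r⦌ : SimplexCategory) ⟶ ⦋n⦌),
      Primitive K τ ∧ σ = (nerve (HK K)).map f.op τ ∧
      ∀ (τ' : ComposableArrows (HK K) n) (f' : (⦋r⦌ : SimplexCategory) ⟶ ⦋n⦌),
        Primitive K τ' → σ = (nerve (HK K)).map f'.op τ' → τ' = τ ∧ f' = f :=
  exists_unique_primitive_factorization_general K σ hrank

end SSetPaper
end
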